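/- Log-type regularization: let f : ℝ^d → ℝ be continuous with compact support, let φ : ℝ^d → ℝ be smooth with compact support, and let k ≥ 1. Define the scaling l(ε) := (log(1/ε))^{-1/k} for ε ∈ (0, e^{-1}). Then there exists C > 0 such that for every ε ∈ (0, e^{-1}), sup_{x ∈ ℝ^d} ‖(f ⋆ D^k φ_{l(ε)})(x)‖ ≤ C log(1/ε), where D^k φ_{l(ε)} is the k-th iterated (total) derivative of the rescaled function φ_{l(ε)}. Equivalently, the compactly supported distribution q = ∂^α f, |α| = k, admits a regularizing net (q ⋆ φ_{l(ε)}) which is of L^∞-log-type. -/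

import Mathlib

open Set MeasureTheory

/-- The mollifier-type rescaling `φ_δ(x) = δ^{-d} φ(x/δ)`. -/
noncomputable def rescaleMollifier {d : ℕ} (φ : (Fin d → ℝ) → ℝ) (δ : ℝ) :
    (Fin d → ℝ) → ℝ :=
  fun x => (δ ^ d)⁻¹ * φ (δ⁻¹ • x)

set_option maxHeartbeats 1000000 in
lemma rescale_deriv_norm_le {d : ℕ} (φ : (Fin d → ℝ) → ℝ) (k : ℕ)
    (hφ : ContDiff ℝ (⊤ : ℕ∞) φ) {δ : ℝ} (hδ : 0 < δ) (y : Fin d → ℝ) :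
    ‖iteratedFDeriv ℝ k (rescaleMollifier φ δ) y‖ ≤
      (δ ^ d)⁻¹ * (δ⁻¹) ^ k * ‖iteratedFDeriv ℝ k φ (δ⁻¹ • y)‖ := by
  set L : (Fin d → ℝ) →L[ℝ] (Fin d → ℝ) := δ⁻¹ • ContinuousLinearMap.id ℝ (Fin d → ℝ)
  have hLapp : ∀ z, L z = δ⁻¹ • z := fun z => rfl
  have hcomp : ContDiff ℝ (k : ℕ∞) (φ ∘ L) := (hφ.of_le (by exact_mod_cast le_top)).comp L.contDiff
  have h1 : rescaleMollifier φ δ = fun x => (δ ^ d)⁻¹ • (φ ∘ L) x := by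
    funext x; simp [rescaleMollifier, hLapp, smul_eq_mul]
  rw [h1, iteratedFDeriv_const_smul_apply' (hcomp.contDiffAt (x := y)),
    L.iteratedFDeriv_comp_right (hφ.of_le (by exact_mod_cast le_top)) y le_rfl]
  refine (norm_smul_le ((δ ^ d)⁻¹)
    ((iteratedFDeriv ℝ k φ (L y)).compContinuousLinearMap fun _ => L)).trans ?_
  have hL : ‖L‖ ≤ δ⁻¹ :=
    ContinuousLinearMap.opNorm_le_bound _ (by positivity) (fun z => by
      rw [hLapp, norm_smul, Real.norm_eq_abs, abs_of_pos (by positivity)])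
  have h2 := ContinuousMultilinearMap.norm_compContinuousLinearMap_le
    (iteratedFDeriv ℝ k φ (L y)) (fun _ : Fin k => L)
  calc ‖(δ ^ d)⁻¹‖ * ‖(iteratedFDeriv ℝ k φ (L y)).compContinuousLinearMap fun _ => L‖
      ≤ (δ ^ d)⁻¹ * (‖iteratedFDeriv ℝ k φ (L y)‖ * ∏ _i : Fin k, ‖L‖) := by
        rw [Real.norm_eq_abs, abs_of_pos (by positivity)]
        exact mul_le_mul_of_nonneg_left h2 (by positivity)
    _ ≤ (δ ^ d)⁻¹ * (‖iteratedFDeriv ℝ k φ (L y)‖ * (δ⁻¹) ^ k) := by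
        refine mul_le_mul_of_nonneg_left (mul_le_mul_of_nonneg_left ?_ (norm_nonneg _))
          (by positivity)
        rw [Finset.prod_const, Finset.card_univ, Fintype.card_fin]
        exact pow_le_pow_left₀ (norm_nonneg _) hL k
    _ = (δ ^ d)⁻¹ * (δ⁻¹) ^ k * ‖iteratedFDeriv ℝ k φ (δ⁻¹ • y)‖ := by
        rw [hLapp]; ring

lemma conv_bound {d : ℕ} (f φ : (Fin d → ℝ) → ℝ) (k : ℕ)
    (hf : Continuous f) (hfc : HasCompactSupport f)
    (hφ : ContDiff ℝ (⊤ : ℕ∞) φ) (hφc : HasCompactSupport φ) :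
    ∃ C > 0, ∀ δ : ℝ, 0 < δ → ∀ x : Fin d → ℝ,
      ‖convolution f (iteratedFDeriv ℝ k (rescaleMollifier φ δ))
        (ContinuousLinearMap.lsmul ℝ ℝ) volume x‖ ≤ C * (δ⁻¹) ^ k := by
  obtain ⟨B, hB⟩ := hfc.exists_bound_of_continuous hf
  have hB0 : ∀ t, ‖f t‖ ≤ max B 0 := fun t => (hB t).trans (le_max_left _ _)
  set M : ℝ := ∫ y, ‖iteratedFDeriv ℝ k φ y‖
  have hM0 : 0 ≤ M := integral_nonneg fun y => norm_nonneg _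
  have hDφcont : Continuous (iteratedFDeriv ℝ k φ) := hφ.continuous_iteratedFDeriv (by exact_mod_cast le_top)
  have hDφc : HasCompactSupport (iteratedFDeriv ℝ k φ) := hφc.iteratedFDeriv k
  refine ⟨(max B 0 + 1) * (M + 1), by positivity, fun δ hδ x => ?_⟩
  set g := iteratedFDeriv ℝ k (rescaleMollifier φ δ)
  have key : ∀ y, ‖g y‖ ≤ (δ ^ d)⁻¹ * (δ⁻¹) ^ k * ‖iteratedFDeriv ℝ k φ (δ⁻¹ • y)‖ :=
    rescale_deriv_norm_le φ k hφ hδ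
  -- the majorant
  set h : (Fin d → ℝ) → ℝ :=
    fun t => max B 0 * ((δ ^ d)⁻¹ * (δ⁻¹) ^ k * ‖iteratedFDeriv ℝ k φ (δ⁻¹ • (x - t))‖)
  have hhc : HasCompactSupport h := by
    have h1 : HasCompactSupport fun y : Fin d → ℝ =>
        max B 0 * ((δ ^ d)⁻¹ * (δ⁻¹) ^ k * ‖iteratedFDeriv ℝ k φ (δ⁻¹ • y)‖) := by
      have := ((hDφc.norm).comp_smul (inv_ne_zero hδ.ne'))
      exact (this.mul_left).mul_left
    exact h1.comp_homeomorph (Homeomorph.subLeft x)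
  have hhcont : Continuous h := by
    apply Continuous.mul continuous_const
    apply Continuous.mul continuous_const
    exact (hDφcont.comp ((continuous_const.sub continuous_id).const_smul δ⁻¹)).norm
  have hhint : Integrable h volume := hhcont.integrable_of_hasCompactSupport hhc
  rw [convolution_lsmul]
  have hbound : ∀ t, ‖f t • g (x - t)‖ ≤ h t := by
    intro t
    exact (norm_smul_le _ _).trans
      (mul_le_mul (hB0 t) (key (x - t)) (norm_nonneg _) (le_max_right _ _))
  have := norm_integral_le_of_norm_le hhint (Filter.Eventually.of_forall hbound)
  refine this.trans ?_
  have hint : ∫ t, h t =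
      max B 0 * ((δ ^ d)⁻¹ * (δ⁻¹) ^ k * ∫ t, ‖iteratedFDeriv ℝ k φ (δ⁻¹ • (x - t))‖) := by
    simp only [h]
    rw [integral_const_mul, integral_const_mul]
  rw [hint]
  have hsub : (∫ t, ‖iteratedFDeriv ℝ k φ (δ⁻¹ • (x - t))‖) =
      ∫ y, ‖iteratedFDeriv ℝ k φ (δ⁻¹ • y)‖ :=
    integral_sub_left_eq_self (fun y => ‖iteratedFDeriv ℝ k φ (δ⁻¹ • y)‖) volume x
  have hcv : (∫ y, ‖iteratedFDeriv ℝ k φ (δ⁻¹ • y)‖) = δ ^ d * M := by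
    rw [Measure.integral_comp_inv_smul volume (fun y => ‖iteratedFDeriv ℝ k φ y‖) δ]
    rw [Module.finrank_fin_fun, abs_of_pos (by positivity), smul_eq_mul]
  rw [hsub, hcv]
  have : max B 0 * ((δ ^ d)⁻¹ * (δ⁻¹) ^ k * (δ ^ d * M)) = max B 0 * M * (δ⁻¹) ^ k := by
    field_simp
  rw [this]
  have h1 : max B 0 * M ≤ (max B 0 + 1) * (M + 1) := by nlinarith [le_max_right B 0]
  exact mul_le_mul_of_nonneg_right h1 (by positivity)

/-- log-type regularization: with the scaling
`l(ε) = (log(1/ε))^{-1/k}`, for `f` continuous with compact support, `φ` smooth with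
compact support and `k ≥ 1`, there is `C > 0` such that
`sup_x ‖(f ⋆ D^k φ_{l(ε)})(x)‖ ≤ C log(1/ε)` for all `ε ∈ (0, e^{-1})`; i.e.
`q = ∂^α f`, `|α| = k`, admits an `L^∞`-log-type regularizing net. -/
theorem regularization_log_type
    {d : ℕ} (f φ : (Fin d → ℝ) → ℝ) (k : ℕ) (hk : 1 ≤ k)
    (hf : Continuous f) (hfc : HasCompactSupport f)
    (hφ : ContDiff ℝ (⊤ : ℕ∞) φ) (hφc : HasCompactSupport φ) :
    ∃ C > 0, ∀ ε ∈ Ioo (0 : ℝ) (Real.exp (-1)), ∀ x : Fin d → ℝ,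
      ‖convolution f
          (iteratedFDeriv ℝ k
            (rescaleMollifier φ ((Real.log (1 / ε)) ^ (-(1 : ℝ) / k))))
          (ContinuousLinearMap.lsmul ℝ ℝ) volume x‖ ≤ C * Real.log (1 / ε) := by
  obtain ⟨C, hC, hbound⟩ := conv_bound f φ k hf hfc hφ hφc
  refine ⟨C, hC, fun ε hε x => ?_⟩
  obtain ⟨hε0, hε1⟩ := hε
  set L : ℝ := Real.log (1 / ε)
  have hL1 : 1 < L := by
    have : Real.exp 1 < 1 / ε := by
      rw [lt_div_iff₀ hε0]
      calc Real.exp 1 * ε < Real.exp 1 * Real.exp (-1) := by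
            exact mul_lt_mul_of_pos_left hε1 (Real.exp_pos 1)
        _ = 1 := by rw [← Real.exp_add]; norm_num
    calc (1 : ℝ) = Real.log (Real.exp 1) := (Real.log_exp 1).symm
      _ < L := Real.log_lt_log (Real.exp_pos 1) this
  have hL0 : 0 < L := lt_trans one_pos hL1
  set δ : ℝ := L ^ (-(1 : ℝ) / k)
  have hδ0 : 0 < δ := Real.rpow_pos_of_pos hL0 _
  have hkne : (k : ℝ) ≠ 0 := Nat.cast_ne_zero.mpr (by omega)
  have hδinv : (δ⁻¹) ^ k = L := by
    have h1 : δ⁻¹ = L ^ ((1:ℝ)/k) := by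
      show (L ^ (-(1:ℝ)/k))⁻¹ = _
      rw [show (-(1:ℝ)/k) = -((1:ℝ)/k) by ring, Real.rpow_neg hL0.le, inv_inv]
    rw [h1, ← Real.rpow_natCast (L ^ ((1:ℝ)/k)) k, ← Real.rpow_mul hL0.le,
      one_div_mul_cancel hkne, Real.rpow_one]
  have := hbound δ hδ0 x
  rwa [hδinv] at this
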